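/- arXiv:2212.05143 — 2 statements merged into one kernel-verified Lean document; each statement's English description precedes it below -/
import Mathlib

section
/- Let b > 0, let β ≥ 0, and let f ∈ C²[0,b]. Then there exists K > 0 such that for every N ∈ ℕ with N ≥ 1, the modified midpoint quadrature error (with a = 0) satisfies |E_N| ≤ K/N². -/
open Filter MeasureTheory Set

/-- The modified midpoint quadrature error `E_N` for `∫_a^b x^β f(x) dx`, where the singular
factor `x^β` is integrated exactly on each subinterval and `f` is evaluated at midpoints:
here `h = (b-a)/N` and `x_t = a + t·h`. -/
noncomputable def midpointError (a b β : ℝ) (f : ℝ → ℝ) (N : ℕ) : ℝ :=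
  (∫ x in a..b, x ^ β * f x) -
    ∑ n ∈ Finset.range N,
      ((a + ((n : ℝ) + 1) * ((b - a) / N)) ^ (β + 1) -
          (a + (n : ℝ) * ((b - a) / N)) ^ (β + 1)) / (β + 1) *
        f (a + ((n : ℝ) + 1 / 2) * ((b - a) / N))

/-!
On a cell `[p, q]` of length `h` with midpoint `m`, write `f x = f m + f' m (x - m) + R x` with
`|R x| ≤ K (x - m) ^ 2`; the remainder costs `O(h³)` per cell, hence `O(h²)` in total. Because
`∫ (x - m) = 0` on the cell, the linear term equals `f' m ∫ (w x - w m) (x - m)`, which for a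
monotone weight `w` is at most `|f' m| (w q - w p) h² / 2`, and these bounds telescope to
`O(h²)` as well. For `w x = x ^ β` the weights `(x_{n+1}^{β+1} - x_n^{β+1}) / (β + 1)` are
exactly the integrals of `w` over the cells.
-/

open scoped NNReal

theorem Convex.abs_sub_sub_mul_le_of_lipschitzOnWith {s : Set ℝ} (hs : Convex ℝ s)
    {f g : ℝ → ℝ} {K : ℝ≥0} (hf : ∀ y ∈ s, HasDerivWithinAt f (g y) s y)
    (hg : LipschitzOnWith K g s) {m x : ℝ} (hm : m ∈ s) (hx : x ∈ s) :
    |f x - f m - g m * (x - m)| ≤ K * (x - m) ^ 2 := by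
  have hsub : uIcc m x ⊆ s := hs.ordConnected.uIcc_subset hm hx
  have hderiv : ∀ y ∈ uIcc m x,
      HasDerivWithinAt (fun z => f z - g m * z) (g y - g m) (uIcc m x) y := fun y hy =>
    ((hf y (hsub hy)).mono hsub).sub (by simpa using (hasDerivWithinAt_id y _).const_mul (g m))
  have hbound : ∀ y ∈ uIcc m x, ‖g y - g m‖ ≤ K * |x - m| := fun y hy => calc
    ‖g y - g m‖ ≤ K * |y - m| := by
      simpa [Real.dist_eq] using hg.dist_le_mul y (hsub hy) m hm
    _ ≤ K * |x - m| := mul_le_mul_of_nonneg_left (abs_sub_left_of_mem_uIcc hy) K.2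
  have := (convex_uIcc m x).norm_image_sub_le_of_norm_hasDerivWithin_le hderiv hbound
    left_mem_uIcc right_mem_uIcc
  rw [Real.norm_eq_abs, Real.norm_eq_abs] at this
  calc |f x - f m - g m * (x - m)| = |f x - g m * x - (f m - g m * m)| := by ring_nf
    _ ≤ K * |x - m| * |x - m| := this
    _ = K * (x - m) ^ 2 := by rw [mul_assoc, abs_mul_abs_self, sq]

theorem integral_sub_midpoint_eq_zero (p q : ℝ) : ∫ x in p..q, (x - (p + q) / 2) = 0 := by
  rw [intervalIntegral.integral_comp_sub_right (fun x => x), integral_id]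
  ring

theorem abs_integral_mul_sub_integral_mul_midpoint_le {w f : ℝ → ℝ} {p q c : ℝ} {K : ℝ≥0}
    (hpq : p ≤ q) (hw : MonotoneOn w (Icc p q)) (hw0 : 0 ≤ w p) (hf : ContinuousOn f (Icc p q))
    (hR : ∀ x ∈ Icc p q,
      |f x - f ((p + q) / 2) - c * (x - (p + q) / 2)| ≤ K * (x - (p + q) / 2) ^ 2) :
    |(∫ x in p..q, w x * f x) - (∫ x in p..q, w x) * f ((p + q) / 2)| ≤
      (q - p) ^ 2 / 4 * (K * w q * (q - p) + 2 * |c| * (w q - w p)) := by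
  set m := (p + q) / 2 with hm_def
  have hmI : m ∈ Icc p q := ⟨by linarith, by linarith⟩
  have hwi : IntervalIntegrable w volume p q := by
    rw [← uIcc_of_le hpq] at hw
    exact hw.intervalIntegrable
  have hwf : IntervalIntegrable (fun x => w x * f x) volume p q :=
    hwi.mul_continuousOn (by rwa [uIcc_of_le hpq])
  have hlin : IntervalIntegrable (fun x => c * w m * (x - m)) volume p q :=
    (continuous_const.mul (continuous_id.sub continuous_const)).intervalIntegrable p q
  have hsplit : (∫ x in p..q, w x * f x) - (∫ x in p..q, w x) * f m =
      ∫ x in p..q, (w x * (f x - f m - c * (x - m)) + c * ((w x - w m) * (x - m))) := by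
    have hpt : ∀ x, w x * (f x - f m - c * (x - m)) + c * ((w x - w m) * (x - m)) =
        w x * f x - w x * f m - c * w m * (x - m) := fun x => by ring
    simp_rw [hpt]
    rw [intervalIntegral.integral_sub (hwf.sub (hwi.mul_const _)) hlin,
      intervalIntegral.integral_sub hwf (hwi.mul_const _),
      intervalIntegral.integral_mul_const, intervalIntegral.integral_const_mul,
      integral_sub_midpoint_eq_zero]
    ring
  have hbound : ∀ x ∈ uIoc p q, ‖w x * (f x - f m - c * (x - m)) + c * ((w x - w m) * (x - m))‖ ≤
      K * w q * ((q - p) / 2) ^ 2 + |c| * ((w q - w p) * ((q - p) / 2)) := by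
    intro x hx
    rw [uIoc_of_le hpq] at hx
    have hxI : x ∈ Icc p q := Ioc_subset_Icc_self hx
    have hwx : w x ≤ w q := hw hxI (right_mem_Icc.2 hpq) hxI.2
    have hwx0 : 0 ≤ w x := hw0.trans (hw (left_mem_Icc.2 hpq) hxI hxI.1)
    have hxm : |x - m| ≤ (q - p) / 2 := abs_le.2 ⟨by linarith [hxI.1], by linarith [hxI.2]⟩
    have hwm : |w x - w m| ≤ w q - w p := abs_sub_le_of_le_of_le
      (hw (left_mem_Icc.2 hpq) hxI hxI.1) hwx
      (hw (left_mem_Icc.2 hpq) hmI hmI.1) (hw hmI (right_mem_Icc.2 hpq) hmI.2)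
    have hrem : |f x - f m - c * (x - m)| ≤ K * ((q - p) / 2) ^ 2 :=
      (hR x hxI).trans (mul_le_mul_of_nonneg_left
        (by rw [← sq_abs]; exact pow_le_pow_left₀ (abs_nonneg _) hxm 2) K.2)
    rw [Real.norm_eq_abs]
    calc _ ≤ |w x * (f x - f m - c * (x - m))| + |c * ((w x - w m) * (x - m))| := abs_add_le _ _
      _ = w x * |f x - f m - c * (x - m)| + |c| * (|w x - w m| * |x - m|) := by
        rw [abs_mul, abs_mul, abs_mul, abs_of_nonneg hwx0]
      _ ≤ w q * (K * ((q - p) / 2) ^ 2) + |c| * ((w q - w p) * ((q - p) / 2)) := by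
        gcongr
        exacts [hwx0.trans hwx, (abs_nonneg _).trans hwm]
      _ = _ := by ring
  rw [hsplit]
  calc _ ≤ (K * w q * ((q - p) / 2) ^ 2 + |c| * ((w q - w p) * ((q - p) / 2))) * |q - p| :=
        intervalIntegral.norm_integral_le_of_norm_le_const hbound
    _ = _ := by rw [abs_of_nonneg (sub_nonneg.2 hpq)]; ring

noncomputable def weightedMidpointError (w f : ℝ → ℝ) (a b : ℝ) (N : ℕ) : ℝ :=
  (∫ x in a..b, w x * f x) -
    ∑ n ∈ Finset.range N,
      (∫ x in a + (n : ℝ) * ((b - a) / N)..a + ((n : ℝ) + 1) * ((b - a) / N), w x) *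
        f (a + ((n : ℝ) + 1 / 2) * ((b - a) / N))

theorem midpointError_eq_weightedMidpointError {β : ℝ} (hβ : -1 < β) (a b : ℝ) (f : ℝ → ℝ)
    (N : ℕ) : midpointError a b β f N = weightedMidpointError (· ^ β) f a b N := by
  unfold midpointError weightedMidpointError
  simp only [integral_rpow (Or.inl hβ)]

theorem abs_weightedMidpointError_le {w f g : ℝ → ℝ} {a b M : ℝ} {K : ℝ≥0} {N : ℕ}
    (hab : a ≤ b) (hN : N ≠ 0) (hw : MonotoneOn w (Icc a b)) (hw0 : 0 ≤ w a)
    (hf : ∀ x ∈ Icc a b, HasDerivWithinAt f (g x) (Icc a b) x)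
    (hg : LipschitzOnWith K g (Icc a b)) (hgM : ∀ x ∈ Icc a b, |g x| ≤ M) :
    |weightedMidpointError w f a b N| ≤
      ((b - a) / N) ^ 2 / 4 * (K * w b * (b - a) + 2 * M * (w b - w a)) := by
  set h := (b - a) / N with hh
  have hN0 : (0 : ℝ) < N := by positivity
  set u : ℕ → ℝ := fun n => a + n * h with hu
  have hu0 : u 0 = a := by simp [hu]
  have huN : u N = b := by simp only [hu, hh]; field_simp; ring
  have hu_succ (n : ℕ) : u (n + 1) = a + ((n : ℝ) + 1) * h := by simp only [hu]; push_cast; ring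
  have hu_mono : Monotone u := fun i j hij => by
    simp only [hu]; gcongr
  have hcell (n : ℕ) (hn : n < N) : Icc (u n) (u (n + 1)) ⊆ Icc a b :=
    Icc_subset_Icc (hu0 ▸ hu_mono (Nat.zero_le n)) (huN ▸ hu_mono hn)
  have hfc : ContinuousOn f (Icc a b) := fun x hx => (hf x hx).continuousWithinAt
  have hwf : IntervalIntegrable (fun x => w x * f x) volume a b := by
    rw [← uIcc_of_le hab] at hw hfc
    exact hw.intervalIntegrable.mul_continuousOn hfc
  have hE : weightedMidpointError w f a b N = ∑ n ∈ Finset.range N,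
      ((∫ x in u n..u (n + 1), w x * f x) -
        (∫ x in u n..u (n + 1), w x) * f ((u n + u (n + 1)) / 2)) := by
    have hmid (n : ℕ) : (u n + u (n + 1)) / 2 = a + ((n : ℝ) + 1 / 2) * h := by
      rw [hu_succ]; simp only [hu]; ring
    rw [Finset.sum_sub_distrib, intervalIntegral.sum_integral_adjacent_intervals, hu0, huN]
    · unfold weightedMidpointError
      refine congrArg _ (Finset.sum_congr rfl fun n _ => ?_)
      rw [hmid, hu_succ]
    · intro n hn
      refine hwf.mono_set ?_
      rw [uIcc_of_le hab, uIcc_of_le (hu_mono n.le_succ)]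
      exact hcell n hn
  have hbound (n : ℕ) (hn : n < N) :
      |(∫ x in u n..u (n + 1), w x * f x) -
        (∫ x in u n..u (n + 1), w x) * f ((u n + u (n + 1)) / 2)| ≤
      h ^ 2 / 4 * (K * w b * h + 2 * M * (w (u (n + 1)) - w (u n))) := by
    have hsub := hcell n hn
    have hle : u n ≤ u (n + 1) := hu_mono n.le_succ
    have hlen : u (n + 1) - u n = h := by rw [hu_succ]; simp only [hu]; ring
    have hmidI : (u n + u (n + 1)) / 2 ∈ Icc a b :=
      hsub ⟨by linarith, by linarith⟩
    have hq : u (n + 1) ∈ Icc a b := hsub (right_mem_Icc.2 hle)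
    have hp : u n ∈ Icc a b := hsub (left_mem_Icc.2 hle)
    calc _ ≤ (u (n + 1) - u n) ^ 2 / 4 * (K * w (u (n + 1)) * (u (n + 1) - u n) +
          2 * |g ((u n + u (n + 1)) / 2)| * (w (u (n + 1)) - w (u n))) :=
        abs_integral_mul_sub_integral_mul_midpoint_le hle (hw.mono hsub)
          (hw0.trans (hw (left_mem_Icc.2 hab) hp hp.1)) (hfc.mono hsub) fun x hx =>
          (convex_Icc a b).abs_sub_sub_mul_le_of_lipschitzOnWith hf hg hmidI (hsub hx)
      _ ≤ _ := by
        rw [hlen]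
        have := hw hp hq hle
        have := hw hq (right_mem_Icc.2 hab) hq.2
        have := hgM _ hmidI
        gcongr
  rw [hE]
  calc _ ≤ ∑ n ∈ Finset.range N, h ^ 2 / 4 * (K * w b * h + 2 * M * (w (u (n + 1)) - w (u n))) :=
        (Finset.abs_sum_le_sum_abs _ _).trans
          (Finset.sum_le_sum fun n hn => hbound n (Finset.mem_range.1 hn))
    _ = h ^ 2 / 4 * (K * w b * (N * h) + 2 * M * (w (u N) - w (u 0))) := by
        rw [← Finset.mul_sum, Finset.sum_add_distrib, ← Finset.mul_sum, ← Finset.mul_sum,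
          Finset.sum_range_sub (fun n => w (u n))]
        simp only [Finset.sum_const, Finset.card_range, nsmul_eq_mul]
    _ = _ := by rw [hu0, huN, hh, mul_div_cancel₀ _ hN0.ne']

theorem ContDiffOn.exists_derivWithin_bounds_Icc {a b : ℝ} (hab : a < b) {f : ℝ → ℝ}
    (hf : ContDiffOn ℝ 2 f (Icc a b)) :
    ∃ (g : ℝ → ℝ) (K : ℝ≥0) (M : ℝ), (∀ x ∈ Icc a b, HasDerivWithinAt f (g x) (Icc a b) x) ∧
      LipschitzOnWith K g (Icc a b) ∧ ∀ x ∈ Icc a b, |g x| ≤ M := by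
  have hg : ContDiffOn ℝ 1 (derivWithin f (Icc a b)) (Icc a b) :=
    hf.derivWithin (uniqueDiffOn_Icc hab) (by norm_num)
  obtain ⟨K, hK⟩ := hg.exists_lipschitzOnWith one_ne_zero (convex_Icc a b) isCompact_Icc
  obtain ⟨M, hM⟩ := isCompact_Icc.exists_bound_of_continuousOn hg.continuousOn
  exact ⟨_, K, M, fun x hx => ((hf.differentiableOn (by norm_num)) x hx).hasDerivWithinAt, hK, hM⟩

theorem stmt4 (b β : ℝ) (hb : 0 < b) (hβ : 0 ≤ β)
    (f : ℝ → ℝ) (hf : ContDiffOn ℝ 2 f (Set.Icc 0 b)) :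
    ∃ K : ℝ, 0 < K ∧ ∀ N : ℕ, 1 ≤ N →
      |midpointError 0 b β f N| ≤ K / (N : ℝ) ^ 2 := by
  obtain ⟨g, K, M, hfg, hgK, hgM⟩ := hf.exists_derivWithin_bounds_Icc hb
  set C := b ^ 2 / 4 * (K * b ^ β * b + 2 * M * (b ^ β - 0 ^ β))
  refine ⟨max C 1, lt_max_of_lt_right one_pos, fun N hN => ?_⟩
  have hw : MonotoneOn (· ^ β) (Icc 0 b) := fun x hx _ _ hxy => Real.rpow_le_rpow hx.1 hxy hβ
  rw [midpointError_eq_weightedMidpointError (by linarith)]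
  calc _ ≤ ((b - 0) / N) ^ 2 / 4 * (K * b ^ β * (b - 0) + 2 * M * (b ^ β - 0 ^ β)) :=
        abs_weightedMidpointError_le hb.le (by omega) hw (Real.rpow_nonneg le_rfl β) hfg hgK hgM
    _ = C / N ^ 2 := by ring
    _ ≤ max C 1 / N ^ 2 := by gcongr; exact le_max_left C 1
end

section
/- Let b > 0, let β ∈ (−1,0), and let f ∈ C²[0,b] with f′(0) = 0. Then there exists K > 0 such that for every N ∈ ℕ with N ≥ 1, the modified midpoint quadrature error (with a = 0) satisfies |E_N| ≤ K/N². -/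
/-!
On the cells `[nh, (n+1)h]` the error is `∑ₙ ∫ x^β (f x - f mₙ)`, with `mₙ` the midpoint.
Taylor's formula at `mₙ` splits `f x - f mₙ` into `f'(mₙ) (x - mₙ)` and a remainder of size
`C h²` (`C` a Lipschitz constant of `f'`), which contributes `C h² ∫ x^β`. As `∫ (x - mₙ) = 0`,
the linear term is `f'(mₙ) ∫ (x^β - mₙ^β) (x - mₙ) = O(|f'(mₙ)| (nh)^(β-1) h³)` on the cells
away from `0`, and `f'(0) = 0` gives `|f'(mₙ)| ≤ C mₙ`, which cancels the blow-up of
`x^(β-1)`: on every cell, the first one included, the linear term is again `O(h² ∫ x^β)`.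
Summing over the cells, `|E_N| ≤ 5 C h² ∫₀ᵇ x^β`.
-/

open Filter MeasureTheory Set

open scoped NNReal

noncomputable def gridPoint (a b : ℝ) (N : ℕ) (t : ℝ) : ℝ := a + t * ((b - a) / N)

lemma gridPoint_natCast_mem_Icc {a b : ℝ} (hab : a ≤ b) {N n : ℕ} (hn : n ≤ N) :
    gridPoint a b N n ∈ Icc a b := by
  have hba : 0 ≤ b - a := sub_nonneg.mpr hab
  have hnN : (n : ℝ) / N ≤ 1 := div_le_one_of_le₀ (by exact_mod_cast hn) (Nat.cast_nonneg N)
  have hstep : (n : ℝ) * ((b - a) / N) = n / N * (b - a) := by ring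
  have : n / N * (b - a) ≤ b - a := mul_le_of_le_one_left hba hnN
  simp only [gridPoint, mem_Icc, hstep]
  constructor <;> [exact le_add_of_nonneg_right (by positivity); linarith]

lemma midpointError_eq_sum_integral {a b β : ℝ} {f : ℝ → ℝ} {N : ℕ} (hab : a ≤ b)
    (hβ : -1 < β) (hf : ContinuousOn f (Icc a b)) (hN : N ≠ 0) :
    midpointError a b β f N = ∑ n ∈ Finset.range N,
      ∫ x in gridPoint a b N n..gridPoint a b N (n + 1),
        x ^ β * (f x - f (gridPoint a b N (n + 1 / 2))) := by
  set x : ℕ → ℝ := fun k => gridPoint a b N k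
  have hsub : ∀ k < N, uIcc (x k) (x (k + 1)) ⊆ Icc a b := fun k hk =>
    uIcc_subset_Icc (gridPoint_natCast_mem_Icc hab hk.le) (gridPoint_natCast_mem_Icc hab hk)
  have hint : ∀ k < N, ∀ c : ℝ → ℝ, ContinuousOn c (Icc a b) →
      IntervalIntegrable (fun t => t ^ β * c t) volume (x k) (x (k + 1)) := fun k hk c hc =>
    (intervalIntegral.intervalIntegrable_rpow' hβ).mul_continuousOn (hc.mono (hsub k hk))
  have hsplit : ∫ t in a..b, t ^ β * f t =
      ∑ k ∈ Finset.range N, ∫ t in x k..x (k + 1), t ^ β * f t := by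
    rw [intervalIntegral.sum_integral_adjacent_intervals fun k hk => hint k hk f hf]
    have hN : (N : ℝ) ≠ 0 := Nat.cast_ne_zero.mpr hN
    simp [x, gridPoint, mul_div_cancel₀ _ hN]
  rw [midpointError, hsplit, ← Finset.sum_sub_distrib]
  refine Finset.sum_congr rfl fun n hn => ?_
  have hn := Finset.mem_range.mp hn
  have hweight := integral_rpow (a := x n) (b := x (n + 1)) (Or.inl hβ)
  simp only [x, gridPoint, Nat.cast_succ] at hint hweight ⊢
  rw [← hweight, ← intervalIntegral.integral_mul_const,
    ← intervalIntegral.integral_sub (hint n hn f hf) (hint n hn _ continuousOn_const)]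
  simp only [mul_sub]

lemma abs_rpow_sub_rpow_le {β u x y : ℝ} (hβ : β ≤ 1) (hu : 0 < u) (hx : u ≤ x) (hy : u ≤ y) :
    |x ^ β - y ^ β| ≤ |β| * u ^ (β - 1) * |x - y| := by
  have hderiv : ∀ t ∈ Ici u, HasDerivWithinAt (fun t => t ^ β) (β * t ^ (β - 1)) (Ici u) t :=
    fun t ht => (Real.hasDerivAt_rpow_const (Or.inl (hu.trans_le ht).ne')).hasDerivWithinAt
  have hbound : ∀ t ∈ Ici u, ‖β * t ^ (β - 1)‖ ≤ |β| * u ^ (β - 1) := fun t ht => by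
    rw [Real.norm_eq_abs, abs_mul, abs_of_nonneg (Real.rpow_nonneg (hu.le.trans ht) _)]
    exact mul_le_mul_of_nonneg_left
      (Real.rpow_le_rpow_of_nonpos hu ht (by linarith)) (abs_nonneg β)
  simpa only [Real.norm_eq_abs] using
    (convex_Ici u).norm_image_sub_le_of_norm_hasDerivWithin_le hderiv hbound hy hx

lemma abs_integral_rpow_mul_le {β u v M : ℝ} {g : ℝ → ℝ} (hβ : -1 < β) (hu : 0 ≤ u)
    (huv : u ≤ v) (hg : ContinuousOn g (Icc u v)) (hM : ∀ x ∈ Icc u v, |g x| ≤ M) :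
    |∫ x in u..v, x ^ β * g x| ≤ M * ∫ x in u..v, x ^ β := by
  have hint : IntervalIntegrable (fun x => x ^ β * g x) volume u v :=
    (intervalIntegral.intervalIntegrable_rpow' hβ).mul_continuousOn (by rwa [uIcc_of_le huv])
  rw [← intervalIntegral.integral_const_mul]
  refine (intervalIntegral.abs_integral_le_integral_abs huv).trans <|
    intervalIntegral.integral_mono_on huv hint.abs
      ((intervalIntegral.intervalIntegrable_rpow' hβ).const_mul M) fun x hx => ?_
  have hx0 : 0 ≤ x ^ β := Real.rpow_nonneg (hu.trans hx.1) β
  rw [abs_mul, abs_of_nonneg hx0, mul_comm M]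
  exact mul_le_mul_of_nonneg_left (hM x hx) hx0

lemma integral_sub_midpoint (u v : ℝ) : ∫ x in u..v, (x - (u + v) / 2) = 0 := by
  rw [intervalIntegral.integral_sub intervalIntegral.intervalIntegrable_id
    intervalIntegrable_const, integral_id, intervalIntegral.integral_const, smul_eq_mul]
  ring

lemma abs_integral_rpow_mul_sub_midpoint_le {β u v : ℝ} (hβ : β ≤ 1) (hu : 0 < u)
    (huv : u ≤ v) :
    |∫ x in u..v, x ^ β * (x - (u + v) / 2)| ≤ |β| * u ^ (β - 1) * (v - u) ^ 3 := by
  set m := (u + v) / 2 with hm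
  have hrpow : IntervalIntegrable (fun x : ℝ => x ^ β) volume u v :=
    intervalIntegral.intervalIntegrable_rpow <| Or.inr <| by
      rw [uIcc_of_le huv]; exact notMem_Icc_of_lt hu
  have hint : IntervalIntegrable (fun x => x ^ β * (x - m)) volume u v :=
    hrpow.mul_continuousOn (continuousOn_id.sub continuousOn_const)
  have hint' : IntervalIntegrable (fun x => m ^ β * (x - m)) volume u v :=
    (continuous_const.mul (continuous_id.sub continuous_const)).intervalIntegrable u v
  have hmoment : ∫ x in u..v, x ^ β * (x - m) = ∫ x in u..v, (x ^ β - m ^ β) * (x - m) := by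
    simp only [sub_mul]
    rw [intervalIntegral.integral_sub hint hint', intervalIntegral.integral_const_mul,
      integral_sub_midpoint, mul_zero, sub_zero]
  have hpoint : ∀ x ∈ uIoc u v,
      ‖(x ^ β - m ^ β) * (x - m)‖ ≤ |β| * u ^ (β - 1) * (v - u) ^ 2 := by
    intro x hx
    rw [uIoc_of_le huv] at hx
    have hxm : |x - m| ≤ v - u := by rw [abs_le]; constructor <;> linarith [hx.1, hx.2, hm]
    rw [Real.norm_eq_abs, abs_mul, sq, ← mul_assoc]
    exact mul_le_mul ((abs_rpow_sub_rpow_le hβ hu hx.1.le (by linarith [hm])).trans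
      (mul_le_mul_of_nonneg_left hxm (by positivity))) hxm (abs_nonneg _) (by positivity)
  rw [hmoment]
  refine (intervalIntegral.norm_integral_le_of_norm_le_const hpoint).trans_eq ?_
  rw [abs_of_nonneg (sub_nonneg.mpr huv)]
  ring

lemma rpow_le_two_mul_rpow {β u v : ℝ} (hβ : -1 ≤ β) (hβ0 : β ≤ 0) (hv : 0 < v)
    (hvu : v ≤ 2 * u) : u ^ β ≤ 2 * v ^ β := by
  have hu : 0 ≤ u := by linarith
  have htwo : (2 : ℝ)⁻¹ ≤ 2 ^ β := by
    simpa [Real.rpow_neg_one] using Real.rpow_le_rpow_of_exponent_le one_le_two hβ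
  calc u ^ β ≤ 2 * (2 ^ β * u ^ β) := by nlinarith [Real.rpow_nonneg hu β]
    _ = 2 * (2 * u) ^ β := by rw [Real.mul_rpow zero_le_two hu]
    _ ≤ 2 * v ^ β := by gcongr 2 * ?_; exact Real.rpow_le_rpow_of_nonpos hv hvu hβ0

lemma mul_rpow_le_integral_rpow {β u v : ℝ} (hβ0 : β ≤ 0) (hu : 0 < u) (huv : u ≤ v) :
    (v - u) * v ^ β ≤ ∫ x in u..v, x ^ β := by
  rw [← smul_eq_mul, ← intervalIntegral.integral_const]
  have hrpow : IntervalIntegrable (fun x : ℝ => x ^ β) volume u v :=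
    intervalIntegral.intervalIntegrable_rpow <| Or.inr <| by
      rw [uIcc_of_le huv]; exact notMem_Icc_of_lt hu
  exact intervalIntegral.integral_mono_on huv intervalIntegrable_const hrpow
    fun x hx => Real.rpow_le_rpow_of_nonpos (hu.trans_le hx.1) hx.2 hβ0

lemma midpoint_mul_abs_integral_rpow_mul_sub_midpoint_le {β h : ℝ} (hβ : -1 < β) (hβ0 : β ≤ 0)
    (hh : 0 < h) (n : ℕ) :
    ((n + 1 / 2) * h) * |∫ x in n * h..(n + 1) * h, x ^ β * (x - (n + 1 / 2) * h)| ≤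
      4 * h ^ 2 * ∫ x in n * h..(n + 1) * h, x ^ β := by
  set u := (n : ℝ) * h with hu_def
  set v := ((n : ℝ) + 1) * h with hv_def
  have huv : u ≤ v := by nlinarith
  have hW : 0 ≤ ∫ x in u..v, x ^ β := intervalIntegral.integral_nonneg huv fun x hx =>
    Real.rpow_nonneg ((by positivity : (0 : ℝ) ≤ u).trans hx.1) β
  rcases n.eq_zero_or_pos with rfl | hn
  · have hI := abs_integral_rpow_mul_le (M := h) (g := fun x => x - ((0 : ℕ) + 1 / 2) * h) hβ
      (by simp [u]) huv (continuousOn_id.sub continuousOn_const) fun x hx => by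
        simp only [hu_def, hv_def, Nat.cast_zero] at hx
        rw [abs_le]; constructor <;> nlinarith [hx.1, hx.2]
    simp only [Nat.cast_zero, zero_add] at hI ⊢
    nlinarith [abs_nonneg (∫ x in u..v, x ^ β * (x - 1 / 2 * h))]
  · have hn1 : (1 : ℝ) ≤ n := by exact_mod_cast hn
    have hu : 0 < u := by positivity
    have hI := abs_integral_rpow_mul_sub_midpoint_le (β := β) (by linarith) hu huv
    rw [show (u + v) / 2 = (n + 1 / 2) * h by ring, show v - u = h by ring] at hI
    have hpow : u * u ^ (β - 1) = u ^ β := by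
      rw [Real.rpow_sub_one hu.ne', mul_div_cancel₀ _ hu.ne']
    have hβabs : |β| ≤ 1 := abs_le.mpr ⟨by linarith, by linarith⟩
    calc ((n + 1 / 2) * h) * |∫ x in u..v, x ^ β * (x - (n + 1 / 2) * h)|
        ≤ (2 * u) * (|β| * u ^ (β - 1) * h ^ 3) := by
          gcongr ?_ * ?_
          nlinarith
      _ ≤ 2 * (u * u ^ (β - 1)) * h ^ 3 := by
          have : 0 ≤ u * u ^ (β - 1) := by positivity
          nlinarith [mul_nonneg (sub_nonneg.mpr hβabs) (mul_nonneg this (pow_pos hh 3).le)]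
      _ ≤ 2 * (2 * v ^ β) * h ^ 3 := by
          rw [hpow]
          gcongr
          exact rpow_le_two_mul_rpow hβ.le hβ0 (by positivity) (by nlinarith)
      _ = 4 * h ^ 2 * ((v - u) * v ^ β) := by rw [show v - u = h by ring]; ring
      _ ≤ 4 * h ^ 2 * ∫ x in u..v, x ^ β := by
          gcongr; exact mul_rpow_le_integral_rpow hβ0 hu huv

section LipschitzDeriv

variable {f f' : ℝ → ℝ} {s : Set ℝ} {C : ℝ≥0}

lemma abs_sub_sub_mul_sub_le_of_lipschitzOnWith (hs : Convex ℝ s)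
    (hf : ∀ y ∈ s, HasDerivWithinAt f (f' y) s y) (hf' : LipschitzOnWith C f' s) {m x : ℝ}
    (hm : m ∈ s) (hx : x ∈ s) :
    |f x - f m - f' m * (x - m)| ≤ C * (x - m) ^ 2 := by
  have hsub : uIcc m x ⊆ s := hs.ordConnected.uIcc_subset hm hx
  have hderiv : ∀ t ∈ uIcc m x,
      HasDerivWithinAt (fun t => f t - f' m * t) (f' t - f' m) (uIcc m x) t := fun t ht =>
    ((hf t (hsub ht)).mono hsub).sub <| by
      simpa using ((hasDerivAt_id t).const_mul (f' m)).hasDerivWithinAt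
  have hbound : ∀ t ∈ uIcc m x, ‖f' t - f' m‖ ≤ C * |x - m| := fun t ht => by
    rw [← Real.dist_eq]
    refine (hf'.dist_le_mul t (hsub ht) m hm).trans ?_
    rw [Real.dist_eq]
    exact mul_le_mul_of_nonneg_left (abs_sub_left_of_mem_uIcc ht) C.2
  have := (convex_uIcc m x).norm_image_sub_le_of_norm_hasDerivWithin_le hderiv hbound
    left_mem_uIcc right_mem_uIcc
  rw [Real.norm_eq_abs, Real.norm_eq_abs, mul_assoc, ← sq, sq_abs] at this
  calc |f x - f m - f' m * (x - m)| = |f x - f' m * x - (f m - f' m * m)| := by ring_nf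
    _ ≤ C * (x - m) ^ 2 := this

lemma abs_integral_rpow_mul_sub_apply_midpoint_le (hs : Convex ℝ s)
    (hf : ∀ y ∈ s, HasDerivWithinAt f (f' y) s y) (hf' : LipschitzOnWith C f' s)
    (h0 : (0 : ℝ) ∈ s) (hf'0 : f' 0 = 0) {β h : ℝ} (hβ : -1 < β) (hβ0 : β ≤ 0) (hh : 0 < h)
    {n : ℕ} (hcell : Icc (n * h) ((n + 1) * h) ⊆ s) :
    |∫ x in n * h..(n + 1) * h, x ^ β * (f x - f ((n + 1 / 2) * h))| ≤
      5 * C * h ^ 2 * ∫ x in n * h..(n + 1) * h, x ^ β := by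
  set u := (n : ℝ) * h with hu_def
  set v := ((n : ℝ) + 1) * h with hv_def
  set m := ((n : ℝ) + 1 / 2) * h with hm_def
  have hu : 0 ≤ u := by positivity
  have huv : u ≤ v := by nlinarith
  have hm : m ∈ Icc u v := ⟨by nlinarith, by nlinarith⟩
  have hxm : ∀ x ∈ Icc u v, |x - m| ≤ h := fun x hx => by
    rw [abs_le]; constructor <;> nlinarith [hx.1, hx.2]
  have hfcont : ContinuousOn f (Icc u v) :=
    (show ContinuousOn f s from fun x hx => (hf x hx).continuousWithinAt).mono hcell
  have hW : 0 ≤ ∫ x in u..v, x ^ β := intervalIntegral.integral_nonneg huv fun x hx =>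
    Real.rpow_nonneg (hu.trans hx.1) β
  have hint : ∀ g : ℝ → ℝ, ContinuousOn g (Icc u v) →
      IntervalIntegrable (fun x => x ^ β * g x) volume u v := fun g hg =>
    (intervalIntegral.intervalIntegrable_rpow' hβ).mul_continuousOn (by rwa [uIcc_of_le huv])
  have hsplit : ∫ x in u..v, x ^ β * (f x - f m) =
      (∫ x in u..v, x ^ β * (f x - f m - f' m * (x - m))) +
        f' m * ∫ x in u..v, x ^ β * (x - m) := by
    have hrem : IntervalIntegrable (fun x => x ^ β * (f x - f m - f' m * (x - m))) volume u v :=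
      hint _ ((hfcont.sub continuousOn_const).sub
        (continuousOn_const.mul (continuousOn_id.sub continuousOn_const)))
    have hlin : IntervalIntegrable (fun x => f' m * (x ^ β * (x - m))) volume u v :=
      (hint _ (continuousOn_id.sub continuousOn_const)).const_mul _
    rw [← intervalIntegral.integral_const_mul, ← intervalIntegral.integral_add hrem hlin]
    exact intervalIntegral.integral_congr fun x _ => by ring
  have hremainder : |∫ x in u..v, x ^ β * (f x - f m - f' m * (x - m))| ≤
      C * h ^ 2 * ∫ x in u..v, x ^ β := by
    refine abs_integral_rpow_mul_le hβ hu huv ((hfcont.sub continuousOn_const).sub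
      (continuousOn_const.mul (continuousOn_id.sub continuousOn_const))) fun x hx => ?_
    refine (abs_sub_sub_mul_sub_le_of_lipschitzOnWith hs hf hf' (hcell hm) (hcell hx)).trans ?_
    rw [← sq_abs]
    exact mul_le_mul_of_nonneg_left (pow_le_pow_left₀ (abs_nonneg _) (hxm x hx) 2) C.2
  have hderiv_mid : |f' m| ≤ C * m := by
    have := hf'.dist_le_mul m (hcell hm) 0 h0
    rwa [Real.dist_eq, Real.dist_eq, hf'0, sub_zero, sub_zero, abs_of_nonneg (hu.trans hm.1)]
      at this
  have hlinear :
      |f' m * ∫ x in u..v, x ^ β * (x - m)| ≤ 4 * C * h ^ 2 * ∫ x in u..v, x ^ β := by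
    rw [abs_mul]
    calc |f' m| * |∫ x in u..v, x ^ β * (x - m)|
        ≤ C * (m * |∫ x in u..v, x ^ β * (x - m)|) := by
          rw [← mul_assoc]; gcongr
      _ ≤ C * (4 * h ^ 2 * ∫ x in u..v, x ^ β) := mul_le_mul_of_nonneg_left
          (midpoint_mul_abs_integral_rpow_mul_sub_midpoint_le hβ hβ0 hh n) C.2
      _ = 4 * C * h ^ 2 * ∫ x in u..v, x ^ β := by ring
  rw [hsplit]
  calc _ ≤ _ := abs_add_le _ _
    _ ≤ C * h ^ 2 * (∫ x in u..v, x ^ β) + 4 * C * h ^ 2 * ∫ x in u..v, x ^ β :=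
        add_le_add hremainder hlinear
    _ = 5 * C * h ^ 2 * ∫ x in u..v, x ^ β := by ring

end LipschitzDeriv

lemma exists_pos_lipschitzOnWith_derivWithin {f : ℝ → ℝ} {a b : ℝ} (hab : a < b)
    (hf : ContDiffOn ℝ 2 f (Icc a b)) :
    ∃ C : ℝ≥0, 0 < C ∧ LipschitzOnWith C (derivWithin f (Icc a b)) (Icc a b) := by
  have hs : UniqueDiffOn ℝ (Icc a b) := uniqueDiffOn_Icc hab
  have hf' : ContDiffOn ℝ 1 (derivWithin f (Icc a b)) (Icc a b) := hf.derivWithin hs le_rfl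
  obtain ⟨C, hC⟩ := isCompact_Icc.exists_bound_of_continuousOn
    (hf'.continuousOn_derivWithin hs le_rfl)
  refine ⟨(⟨max C 1, le_max_of_le_right zero_le_one⟩ : ℝ≥0),
    NNReal.coe_pos.mp (lt_max_of_lt_right zero_lt_one),
    (convex_Icc a b).lipschitzOnWith_of_nnnorm_derivWithin_le
      (hf'.differentiableOn one_ne_zero) fun x hx => ?_⟩
  exact NNReal.coe_le_coe.mp ((hC x hx).trans (le_max_left _ _))

theorem stmt5 (b β : ℝ) (hb : 0 < b) (hβ : β ∈ Set.Ioo (-1 : ℝ) 0)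
    (f : ℝ → ℝ) (hf : ContDiffOn ℝ 2 f (Set.Icc 0 b))
    (hf0 : derivWithin f (Set.Icc 0 b) 0 = 0) :
    ∃ K : ℝ, 0 < K ∧ ∀ N : ℕ, 1 ≤ N →
      |midpointError 0 b β f N| ≤ K / (N : ℝ) ^ 2 := by
  obtain ⟨hβ, hβ0⟩ := hβ
  obtain ⟨C, hC, hlip⟩ := exists_pos_lipschitzOnWith_derivWithin hb hf
  have hderiv : ∀ x ∈ Icc 0 b, HasDerivWithinAt f (derivWithin f (Icc 0 b) x) (Icc 0 b) x :=
    fun x hx => (hf.differentiableOn two_ne_zero x hx).hasDerivWithinAt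
  refine ⟨5 * C * b ^ 2 * (b ^ (β + 1) / (β + 1)),
    mul_pos (by positivity) (div_pos (by positivity) (by linarith)), fun N hN => ?_⟩
  have hN0 : (0 : ℝ) < N := by exact_mod_cast hN
  set h := b / N with h_def
  have hh : 0 < h := div_pos hb hN0
  have hNh : N * h = b := mul_div_cancel₀ b hN0.ne'
  have hcell : ∀ n ∈ Finset.range N, Icc (n * h) ((n + 1) * h) ⊆ Icc 0 b := fun n hn =>
    Icc_subset_Icc (by positivity) <| hNh ▸ mul_le_mul_of_nonneg_right
      (by exact_mod_cast Finset.mem_range.mp hn) hh.le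
  have hweights : ∑ n ∈ Finset.range N, ∫ x in n * h..(n + 1) * h, x ^ β =
      ∫ x in (0 : ℝ)..b, x ^ β := by
    have := intervalIntegral.sum_integral_adjacent_intervals (a := fun n : ℕ => n * h) (n := N)
      (f := fun x => x ^ β) (μ := volume) fun k _ => intervalIntegral.intervalIntegrable_rpow' hβ
    simpa [hNh] using this
  rw [midpointError_eq_sum_integral hb.le (by linarith) hf.continuousOn (by omega)]
  simp only [gridPoint, zero_add, sub_zero]
  calc _ ≤ ∑ n ∈ Finset.range N, 5 * C * h ^ 2 * ∫ x in n * h..(n + 1) * h, x ^ β :=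
        (Finset.abs_sum_le_sum_abs _ _).trans <| Finset.sum_le_sum fun n hn =>
          abs_integral_rpow_mul_sub_apply_midpoint_le (convex_Icc 0 b) hderiv hlip
            ⟨le_rfl, hb.le⟩ hf0 hβ hβ0.le hh (hcell n hn)
    _ = 5 * C * b ^ 2 * (b ^ (β + 1) / (β + 1)) / N ^ 2 := by
        rw [← Finset.mul_sum, hweights, integral_rpow (Or.inl hβ),
          Real.zero_rpow (by linarith), sub_zero, h_def]
        ring
end
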